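/- arXiv:1012.5650 — 2 statements merged into one kernel-verified Lean document; each statement's English description precedes it below -/
import Mathlib

section
/- Fix T > 0, a real β ≥ 5, and an integer n ≥ 1. Define the graded partition t_i = T·(1 − (1 − i/n)^β) for i = 0, …, n, with increments δ_i = t_i − t_{i-1}. Then for every i with 1 ≤ i ≤ n − 1, one has δ_i^5 / (T − t_i)^4 ≤ T·β^5·2^{5(β−1)} / n^5. -/
/-- For the graded partition `t i = T * (1 - (1 - i/n)^β)` of `[0, T]` with `β ≥ 5`,
with increments `δ i = t i - t (i-1)`, one has, for `1 ≤ i ≤ n - 1`,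
`δ i ^ 5 / (T - t i) ^ 4 ≤ T * β ^ 5 * 2 ^ (5 * (β - 1)) / n ^ 5`. -/
theorem graded_partition_termwise_bound (T : ℝ) (hT : 0 < T) (β : ℝ) (hβ : 5 ≤ β)
    (n : ℕ) (hn : 1 ≤ n)
    (t : ℕ → ℝ) (ht : ∀ i, t i = T * (1 - (1 - (i : ℝ) / n) ^ β))
    (δ : ℕ → ℝ) (hδ : ∀ i, 1 ≤ i → δ i = t i - t (i - 1)) :
    ∀ i, 1 ≤ i → i ≤ n - 1 →
      δ i ^ (5 : ℕ) / (T - t i) ^ (4 : ℕ) ≤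
        T * β ^ (5 : ℕ) * (2 : ℝ) ^ (5 * (β - 1)) / (n : ℝ) ^ (5 : ℕ) := by
  intro i hi1 hi2
  have hn' : (0:ℝ) < n := by exact_mod_cast hn
  have hin : i + 1 ≤ n := by omega
  have hinR : (i:ℝ) + 1 ≤ n := by exact_mod_cast hin
  set u : ℝ := 1 - (i:ℝ)/n with hu_def
  have hu_pos : 0 < u := by
    rw [hu_def, sub_pos, div_lt_one hn']; linarith
  have hu_ge : 1/(n:ℝ) ≤ u := by
    rw [hu_def, le_sub_iff_add_le, ← add_div, div_le_one hn']; linarith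
  have hu_le : u ≤ 1 := by
    have : (0:ℝ) ≤ (i:ℝ)/n := by positivity
    rw [hu_def]; linarith
  set v : ℝ := 1 - ((i-1:ℕ):ℝ)/n with hv_def
  have hvu : v = u + 1/n := by
    have hc : ((i-1:ℕ):ℝ) = (i:ℝ) - 1 := by
      have := Nat.cast_sub (R := ℝ) hi1
      simpa using this
    rw [hv_def, hu_def, hc]; ring
  have hv_pos : 0 < v := by rw [hvu]; positivity
  have hv2u : v ≤ 2 * u := by
    rw [hvu]; linarith
  have hβ1 : (0:ℝ) ≤ β - 1 := by linarith
  -- Bernoulli: v^β - u^β ≤ β * v^(β-1) * (1/n)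
  have hbern : v ^ β - u ^ β ≤ β * v ^ (β - 1) * (1/n) := by
    have hs : (-1:ℝ) ≤ u / v - 1 := by
      have : 0 ≤ u / v := by positivity
      linarith
    have h := one_add_mul_self_le_rpow_one_add hs (by linarith : (1:ℝ) ≤ β)
    have hrw : (1 + (u / v - 1)) = u / v := by ring
    rw [hrw, Real.div_rpow hu_pos.le hv_pos.le] at h
    have hvβ : v ^ β = v ^ (β - 1) * v := by
      rw [← Real.rpow_add_one hv_pos.ne' (β - 1)]; ring_nf
    have h2 : v ^ β * (1 + β * (u / v - 1)) ≤ u ^ β := by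
      rw [mul_comm]
      calc (1 + β * (u / v - 1)) * v ^ β ≤ (u ^ β / v ^ β) * v ^ β := by
            apply mul_le_mul_of_nonneg_right h (Real.rpow_nonneg hv_pos.le β)
        _ = u ^ β := by
            field_simp
    have hexp : v ^ β * (1 + β * (u / v - 1)) =
        v ^ β + β * (v ^ (β - 1) * u - v ^ β) := by
      rw [hvβ]
      field_simp
    rw [hexp] at h2
    have huv : v - u = 1/n := by rw [hvu]; ring
    have hkey : β * v ^ (β - 1) * (1/n) = β * (v ^ β - v ^ (β - 1) * u) := by
      rw [← huv, hvβ]; ring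
    rw [hkey]; linarith
  -- t values
  have hti : T - t i = T * u ^ β := by rw [ht i]; ring
  have hδi : δ i = T * (v ^ β - u ^ β) := by
    rw [hδ i hi1, ht i, ht (i-1), ← hu_def, ← hv_def]; ring
  have hδ_nonneg : 0 ≤ δ i := by
    rw [hδi]
    have : u ^ β ≤ v ^ β :=
      Real.rpow_le_rpow hu_pos.le (by rw [hvu]; exact le_add_of_nonneg_right (by positivity)) (by linarith)
    nlinarith
  have hv_le : v ^ (β - 1) ≤ 2 ^ (β - 1) * u ^ (β - 1) := by
    calc v ^ (β - 1) ≤ (2 * u) ^ (β - 1) :=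
          Real.rpow_le_rpow hv_pos.le hv2u hβ1
      _ = 2 ^ (β - 1) * u ^ (β - 1) := Real.mul_rpow (by norm_num) hu_pos.le
  have hδ_le : δ i ≤ T * β * (2 ^ (β - 1) * u ^ (β - 1)) / n := by
    rw [hδi]
    calc T * (v ^ β - u ^ β) ≤ T * (β * v ^ (β - 1) * (1/n)) :=
          mul_le_mul_of_nonneg_left hbern hT.le
      _ ≤ T * (β * (2 ^ (β - 1) * u ^ (β - 1)) * (1/n)) := by
          apply mul_le_mul_of_nonneg_left _ hT.le
          apply mul_le_mul_of_nonneg_right _ (by positivity)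
          exact mul_le_mul_of_nonneg_left hv_le (by linarith)
      _ = T * β * (2 ^ (β - 1) * u ^ (β - 1)) / n := by ring
  -- put together
  have huβ_pos : 0 < u ^ β := Real.rpow_pos_of_pos hu_pos β
  have hTu4 : (0:ℝ) < (T - t i) ^ (4:ℕ) := by rw [hti]; positivity
  rw [div_le_div_iff₀ hTu4 (by positivity : (0:ℝ) < (n:ℝ)^(5:ℕ))]
  have h5 : δ i ^ (5:ℕ) ≤ (T * β * (2 ^ (β - 1) * u ^ (β - 1)) / n) ^ (5:ℕ) :=
    pow_le_pow_left₀ hδ_nonneg hδ_le 5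
  calc δ i ^ (5:ℕ) * (n:ℝ) ^ (5:ℕ)
      ≤ (T * β * (2 ^ (β - 1) * u ^ (β - 1)) / n) ^ (5:ℕ) * (n:ℝ) ^ (5:ℕ) := by
        exact mul_le_mul_of_nonneg_right h5 (by positivity)
    _ = T ^ (5:ℕ) * β ^ (5:ℕ) * ((2:ℝ) ^ (β - 1)) ^ (5:ℕ) * (u ^ (β - 1)) ^ (5:ℕ) := by
        field_simp
    _ = T ^ (5:ℕ) * β ^ (5:ℕ) * (2:ℝ) ^ (5 * (β - 1)) * u ^ ((β - 1) * 5) := by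
        rw [← Real.rpow_natCast ((2:ℝ) ^ (β - 1)) 5, ← Real.rpow_mul (by norm_num : (0:ℝ) ≤ 2),
          ← Real.rpow_natCast (u ^ (β - 1)) 5, ← Real.rpow_mul hu_pos.le]
        push_cast
        rw [show (β - 1) * 5 = 5 * (β - 1) by ring]
    _ ≤ T ^ (5:ℕ) * β ^ (5:ℕ) * (2:ℝ) ^ (5 * (β - 1)) * u ^ (β * 4) := by
        apply mul_le_mul_of_nonneg_left _ (by positivity)
        exact Real.rpow_le_rpow_of_exponent_ge hu_pos hu_le (by linarith)
    _ = T * β ^ (5:ℕ) * (2:ℝ) ^ (5 * (β - 1)) * (T - t i) ^ (4:ℕ) := by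
        rw [hti, mul_pow, ← Real.rpow_natCast (u ^ β) 4, ← Real.rpow_mul hu_pos.le]
        push_cast
        ring
end

section
/- Fix T > 0, a real β ≥ 5, and an integer n ≥ 1. Define the graded partition t_i = T·(1 − (1 − i/n)^β) for i = 0, …, n, with increments δ_i = t_i − t_{i-1}. Then Σ_{i=1}^{n-1} δ_i^5 / (T − t_i)^4 ≤ T·β^5·2^{5(β−1)} / n^4. -/
open Real

/-- Per-term bound: increment of `x ↦ x^β` over `[a, a+h]`. -/
lemma rpow_diff_le (a h β : ℝ) (ha : 0 < a) (hh : 0 < h) (hβ : 1 ≤ β) :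
    (a + h) ^ β - a ^ β ≤ β * (a + h) ^ (β - 1) * h := by
  set b := a + h with hb
  have hb0 : 0 < b := by positivity
  have hbern : 1 + β * (a / b - 1) ≤ (a / b) ^ β := by
    have := one_add_mul_self_le_rpow_one_add (s := a / b - 1) (p := β)
      (by have : 0 ≤ a / b := by positivity
          linarith) (by linarith)
    simpa using this
  have hdiv : (a / b) ^ β = a ^ β / b ^ β := Real.div_rpow ha.le hb0.le β
  rw [hdiv] at hbern
  have hbβ : (0:ℝ) < b ^ β := Real.rpow_pos_of_pos hb0 β
  have h1 : b ^ β * (1 + β * (a / b - 1)) ≤ a ^ β := by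
    calc b ^ β * (1 + β * (a / b - 1)) ≤ b ^ β * (a ^ β / b ^ β) :=
          mul_le_mul_of_nonneg_left hbern hbβ.le
      _ = a ^ β := by field_simp
  have hbm1 : b ^ (β - 1) = b ^ β / b := by
    rw [Real.rpow_sub hb0, Real.rpow_one]
  have key : b ^ β * (β * (1 - a / b)) = β * b ^ (β - 1) * h := by
    rw [hbm1]
    field_simp
    ring
  nlinarith [key, h1]

/-- For the graded partition `t i = T * (1 - (1 - i/n)^β)` of `[0, T]` with `β ≥ 5`,
with increments `δ i = t i - t (i-1)`, the accumulated error satisfies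
`∑_{i=1}^{n-1} δ i ^ 5 / (T - t i) ^ 4 ≤ T * β ^ 5 * 2 ^ (5 * (β - 1)) / n ^ 4`. -/
theorem graded_partition_sum_bound (T : ℝ) (hT : 0 < T) (β : ℝ) (hβ : 5 ≤ β)
    (n : ℕ) (hn : 1 ≤ n)
    (t : ℕ → ℝ) (ht : ∀ i, t i = T * (1 - (1 - (i : ℝ) / n) ^ β))
    (δ : ℕ → ℝ) (hδ : ∀ i, 1 ≤ i → δ i = t i - t (i - 1)) :
    ∑ i ∈ Finset.Icc 1 (n - 1), δ i ^ (5 : ℕ) / (T - t i) ^ (4 : ℕ) ≤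
      T * β ^ (5 : ℕ) * (2 : ℝ) ^ (5 * (β - 1)) / (n : ℝ) ^ (4 : ℕ) := by
  have hn0 : (0:ℝ) < n := by exact_mod_cast hn
  set C : ℝ := T * β ^ (5:ℕ) * (2:ℝ) ^ (5 * (β - 1)) with hC
  have h2pos : (0:ℝ) < (2:ℝ) ^ (5 * (β - 1)) := Real.rpow_pos_of_pos (by norm_num) _
  have hCpos : 0 < C := by
    rw [hC]; positivity
  have hterm : ∀ i ∈ Finset.Icc 1 (n - 1),
      δ i ^ (5:ℕ) / (T - t i) ^ (4:ℕ) ≤ C / (n:ℝ) ^ (5:ℕ) := by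
    intro i hi
    rw [Finset.mem_Icc] at hi
    obtain ⟨hi1, hi2⟩ := hi
    have hi_lt : i < n := by omega
    have hi_n : (i:ℝ) + 1 ≤ n := by exact_mod_cast hi_lt
    set a : ℝ := 1 - (i:ℝ) / n with haa
    have ha : 0 < a := by
      rw [haa, sub_pos, div_lt_one hn0]; linarith
    have ha1 : a ≤ 1 := by
      have : 0 ≤ (i:ℝ)/n := by positivity
      rw [haa]; linarith
    have hinv : (1:ℝ)/n ≤ a := by
      rw [div_le_iff₀ hn0, haa, sub_mul, one_mul, div_mul_cancel₀ _ hn0.ne']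
      linarith
    set b : ℝ := a + 1/n with hbb
    have hb0 : 0 < b := by positivity
    have hb2a : b ≤ 2 * a := by rw [hbb]; linarith
    have hti : T - t i = T * a ^ β := by rw [ht i, haa]; ring
    have hcast : ((i - 1 : ℕ) : ℝ) = (i:ℝ) - 1 := by
      have := Nat.cast_sub (R := ℝ) hi1
      simpa using this
    have hb_eq : 1 - ((i - 1 : ℕ):ℝ)/n = b := by
      rw [hcast, hbb, haa]; ring
    have hδi : δ i = T * (b ^ β - a ^ β) := by
      rw [hδ i hi1, ht i, ht (i-1), hb_eq, haa]; ring
    have hninv : (0:ℝ) ≤ 1/n := by positivity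
    have hpow_le : a ^ β ≤ b ^ β :=
      Real.rpow_le_rpow ha.le (by rw [hbb]; linarith) (by linarith)
    have hδ0 : 0 ≤ δ i := by
      rw [hδi]
      have := sub_nonneg.mpr hpow_le
      positivity
    have hbound : b ^ (β - 1) ≤ (2*a) ^ (β - 1) :=
      Real.rpow_le_rpow hb0.le hb2a (by linarith)
    have hδle : δ i ≤ T * β * (2*a) ^ (β - 1) * (1/n) := by
      rw [hδi]
      have h1 : b ^ β - a ^ β ≤ β * b ^ (β - 1) * (1/n) := by
        have := rpow_diff_le a (1/n) β ha (by positivity) (by linarith)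
        rw [← hbb] at this
        exact this
      calc T * (b ^ β - a ^ β) ≤ T * (β * b ^ (β-1) * (1/n)) :=
            mul_le_mul_of_nonneg_left h1 hT.le
        _ ≤ T * (β * (2*a) ^ (β-1) * (1/n)) := by
            have hβ0 : (0:ℝ) ≤ β := by linarith
            exact mul_le_mul_of_nonneg_left (mul_le_mul_of_nonneg_right
              (mul_le_mul_of_nonneg_left hbound hβ0) hninv) hT.le
        _ = T * β * (2*a) ^ (β-1) * (1/n) := by ring
    rw [hti]
    have haβ : (0:ℝ) < a ^ β := Real.rpow_pos_of_pos ha β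
    rw [div_le_div_iff₀ (by positivity) (by positivity)]
    have h2a5 : ((2*a) ^ (β-1)) ^ (5:ℕ) = (2:ℝ)^(5*(β-1)) * a^(5*(β-1)) := by
      rw [← Real.rpow_natCast ((2*a)^(β-1)) 5, ← Real.rpow_mul (by positivity),
        show (β-1)*((5:ℕ):ℝ) = 5*(β-1) by push_cast; ring,
        Real.mul_rpow (by norm_num) ha.le]
    have haexp : a ^ (5*(β-1)) ≤ a ^ (β*4) :=
      Real.rpow_le_rpow_of_exponent_ge ha ha1 (by linarith)
    have haβ4 : (a ^ β) ^ (4:ℕ) = a ^ (β*4) := by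
      rw [← Real.rpow_natCast (a^β) 4, ← Real.rpow_mul ha.le]
      norm_num
    calc δ i ^ (5:ℕ) * (n:ℝ)^(5:ℕ)
        ≤ (T * β * (2*a) ^ (β-1) * (1/n)) ^ (5:ℕ) * (n:ℝ)^(5:ℕ) := by
          gcongr
      _ = T^5 * β^5 * (((2*a) ^ (β-1)) ^ (5:ℕ)) := by
          field_simp
      _ = T^5 * β^5 * ((2:ℝ)^(5*(β-1)) * a^(5*(β-1))) := by rw [h2a5]
      _ ≤ T^5 * β^5 * ((2:ℝ)^(5*(β-1)) * a^(β*4)) := by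
          exact mul_le_mul_of_nonneg_left
            (mul_le_mul_of_nonneg_left haexp h2pos.le) (by positivity)
      _ = C * (T * a ^ β) ^ (4:ℕ) := by
          rw [hC, mul_pow, haβ4]; ring
  calc ∑ i ∈ Finset.Icc 1 (n - 1), δ i ^ (5:ℕ) / (T - t i) ^ (4:ℕ)
      ≤ ∑ _i ∈ Finset.Icc 1 (n - 1), C / (n:ℝ) ^ (5:ℕ) := Finset.sum_le_sum hterm
    _ = ((n - 1 : ℕ) : ℝ) * (C / (n:ℝ) ^ (5:ℕ)) := by
        rw [Finset.sum_const, Nat.card_Icc, nsmul_eq_mul]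
        norm_num
    _ ≤ (n : ℝ) * (C / (n:ℝ) ^ (5:ℕ)) := by
        have : ((n - 1 : ℕ) : ℝ) ≤ n := by
          exact_mod_cast Nat.sub_le n 1
        have hpos : (0:ℝ) ≤ C / (n:ℝ) ^ (5:ℕ) := by positivity
        exact mul_le_mul_of_nonneg_right this hpos
    _ = C / (n:ℝ) ^ (4:ℕ) := by
        field_simp
end
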